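/- arXiv:2101.03080 — 3 statements merged into one kernel-verified Lean document; each statement's English description precedes it below -/
import Mathlib

section
/- Let F be an invertible 2×2 complex matrix and T = diag(i, −i). If (F̄ᵗ)⁻¹ = T F T⁻¹, then the matrix f = F̄ᵗ F has equal diagonal entries. -/
/-!
Write `σ = diag(1, -1)`, so that `T = i σ` and conjugation by `T` is conjugation by the involution
`σ`. The hypothesis then says `σ F σ Fᴴ = 1`, i.e. `F σ Fᴴ = σ`, and the difference of the
diagonal entries of `Fᴴ F` is `tr (σ Fᴴ F) = tr (F σ Fᴴ) = tr σ = 0`.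
-/

open Matrix Complex

namespace Matrix

variable {n R : Type*} [Fintype n] [DecidableEq n]

theorem smul_mul_mul_inv_smul_of_mul_self_eq_one {K : Type*} [Field K] {S : Matrix n n K} (hS : S * S = 1) {c : K}
    (hc : c ≠ 0) (F : Matrix n n K) : c • S * F * (c • S)⁻¹ = S * F * S := by
  have hinv : (c • S)⁻¹ = c⁻¹ • S :=
    inv_eq_left_inv (by rw [smul_mul_smul_comm, inv_mul_cancel₀ hc, hS, one_smul])
  rw [hinv, smul_mul_assoc, smul_mul_assoc, mul_smul_comm, smul_smul, mul_inv_cancel₀ hc,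
    one_smul]

theorem trace_mul_mul_eq_trace_of_mul_self_eq_one [CommRing R]
    {S A B : Matrix n n R} (hS : S * S = 1) (h : S * A * S * B = 1) :
    trace (S * (B * A)) = trace S :=
  calc trace (S * (B * A)) = trace (A * (S * B)) := by
          rw [← Matrix.mul_assoc, trace_mul_cycle, Matrix.mul_assoc]
    _ = trace (S * (S * A * S * B)) := by
          simp only [← Matrix.mul_assoc, hS, Matrix.one_mul]
    _ = trace S := by rw [h, Matrix.mul_one]

theorem diagonal_one_neg_one_mul_self [Ring R] :
    diagonal ![(1 : R), -1] * diagonal ![1, -1] = 1 := by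
  rw [diagonal_mul_diagonal, ← diagonal_one]
  congr 1
  ext i
  fin_cases i <;> simp

theorem trace_diagonal_one_neg_one_mul [Ring R] (A : Matrix (Fin 2) (Fin 2) R) :
    trace (diagonal ![1, -1] * A) = A 0 0 - A 1 1 := by
  simp [trace_fin_two, sub_eq_add_neg]

end Matrix

/-- If `F` is an invertible 2×2 complex matrix, `T = diag(i, -i)`, and
`(F̄ᵗ)⁻¹ = T F T⁻¹`, then `f = F̄ᵗ F` has equal diagonal entries. -/
theorem diag_entries_equal (F : Matrix (Fin 2) (Fin 2) ℂ) (hF : IsUnit F.det)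
    (h : (Fᴴ)⁻¹ = !![I, 0; 0, -I] * F * (!![I, 0; 0, -I])⁻¹) :
    (Fᴴ * F) 0 0 = (Fᴴ * F) 1 1 := by
  have hT : !![I, 0; 0, -I] = I • diagonal ![(1 : ℂ), -1] := by
    ext i j; fin_cases i <;> fin_cases j <;> simp
  have hσF : diagonal ![1, -1] * F * diagonal ![1, -1] * Fᴴ = 1 := by
    rw [← smul_mul_mul_inv_smul_of_mul_self_eq_one diagonal_one_neg_one_mul_self I_ne_zero, ← hT,
      ← h]
    exact nonsing_inv_mul _ (by rw [det_conjTranspose]; exact hF.star)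
  have htr := trace_mul_mul_eq_trace_of_mul_self_eq_one diagonal_one_neg_one_mul_self hσF
  rw [trace_diagonal_one_neg_one_mul, ← Matrix.mul_one (diagonal _),
    trace_diagonal_one_neg_one_mul] at htr
  simpa [sub_eq_zero] using htr
end

section
/- Let α and δ be holomorphic functions on a connected open set U ⊆ ℂ, not identically zero, and suppose there exist p, q ∈ U with ord_p(δ) < ord_p(α) and ord_q(α) < ord_q(δ). Then for any continuous positive function l on U, the condition l(x)⁻²|δ(x)|² ≠ l(x)²|α(x)|² cannot hold for all x ∈ U. -/
/-!
Since `ord_p α > ord_p δ ≥ 0` we have `α p = 0`, and likewise `δ q = 0`. Hence the continuous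
functions `|δ|²` and `l⁴ |α|²` compare one way at `p` and the other way at `q`, so by
connectedness they agree somewhere in `U`; there `l⁻² |δ|² = l² |α|²` (both sides vanish when
`l = 0`).
-/

lemma apply_eq_zero_of_analyticOrderAt_lt {𝕜 E F : Type*} [NontriviallyNormedField 𝕜]
    [NormedAddCommGroup E] [NormedSpace 𝕜 E] [NormedAddCommGroup F] [NormedSpace 𝕜 F]
    {f : 𝕜 → E} {g : 𝕜 → F} {z : 𝕜} (h : analyticOrderAt g z < analyticOrderAt f z) :
    f z = 0 :=
  apply_eq_zero_of_analyticOrderAt_ne_zero (pos_of_gt h).ne'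

lemma inv_sq_mul_eq_sq_mul_of_eq_pow_four_mul {K : Type*} [Field K] {l a b : K}
    (h : a = l ^ 4 * b) : (l ^ 2)⁻¹ * a = l ^ 2 * b := by
  rcases eq_or_ne l 0 with rfl | hl
  · simp
  · rw [h]
    field_simp

theorem degeneration_of_metric_general (U : Set ℂ) (hUconn : IsConnected U)
    (α δ : ℂ → ℂ) (l : ℂ → ℝ)
    (hα : ∀ x ∈ U, AnalyticAt ℂ α x) (hδ : ∀ x ∈ U, AnalyticAt ℂ δ x)
    (hl : ContinuousOn l U)
    (p q : ℂ) (hp : p ∈ U) (hq : q ∈ U)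
    (hordp : analyticOrderAt δ p < analyticOrderAt α p)
    (hordq : analyticOrderAt α q < analyticOrderAt δ q) :
    ¬ ∀ x ∈ U, ((l x) ^ 2)⁻¹ * ‖δ x‖ ^ 2 ≠ (l x) ^ 2 * ‖α x‖ ^ 2 := by
  have hαc : ContinuousOn α U := fun x hx => (hα x hx).continuousAt.continuousWithinAt
  have hδc : ContinuousOn δ U := fun x hx => (hδ x hx).continuousAt.continuousWithinAt
  have hαp : α p = 0 := apply_eq_zero_of_analyticOrderAt_lt hordp
  have hδq : δ q = 0 := apply_eq_zero_of_analyticOrderAt_lt hordq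
  obtain ⟨x, hx, hxeq⟩ := hUconn.isPreconnected.intermediate_value₂
    (f := fun x => l x ^ 4 * ‖α x‖ ^ 2) (g := fun x => ‖δ x‖ ^ 2) hp hq
    ((hl.pow 4).mul (hαc.norm.pow 2)) (hδc.norm.pow 2)
    (by simp [hαp]) (by simp [hδq]; positivity)
  exact fun hne => hne x hx (inv_sq_mul_eq_sq_mul_of_eq_pow_four_mul hxeq.symm)

/-- Let `α` and `δ` be holomorphic (analytic) on a connected open set `U ⊆ ℂ`, neither
identically zero on `U`, and suppose there are `p, q ∈ U` with
`ord_p δ < ord_p α` and `ord_q α < ord_q δ`.  Then for any continuous positive function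
`l` on `U`, the nondegeneracy condition `l(x)⁻²|δ(x)|² ≠ l(x)²|α(x)|²` cannot hold at
every point of `U`. -/
theorem degeneration_of_metric (U : Set ℂ) (hUopen : IsOpen U) (hUconn : IsConnected U)
    (α δ : ℂ → ℂ) (l : ℂ → ℝ)
    (hα : ∀ x ∈ U, AnalyticAt ℂ α x) (hδ : ∀ x ∈ U, AnalyticAt ℂ δ x)
    (hα0 : ¬ ∀ x ∈ U, α x = 0) (hδ0 : ¬ ∀ x ∈ U, δ x = 0)
    (hl : ContinuousOn l U) (hlpos : ∀ x ∈ U, 0 < l x)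
    (p q : ℂ) (hp : p ∈ U) (hq : q ∈ U)
    (hordp : analyticOrderAt δ p < analyticOrderAt α p)
    (hordq : analyticOrderAt α q < analyticOrderAt δ q) :
    ¬ ∀ x ∈ U, ((l x) ^ 2)⁻¹ * ‖δ x‖ ^ 2 ≠ (l x) ^ 2 * ‖α x‖ ^ 2 :=
  degeneration_of_metric_general U hUconn α δ l hα hδ hl p q hp hq hordp hordq
end

section
/- Let l : U → ℝ_{>0} be a C² positive function on a connected open set U ⊆ ℂ and a, d holomorphic-type smooth functions with d nowhere zero on U. Suppose u := log(l⁴|a|²/|d|²) is well-defined and smooth where a ≠ 0, attains an interior maximum at p ∈ U with a(p) ≠ 0, and satisfies the elliptic inequality Δu ≥ c·(e^{u/1} − e^{-u}) pointwise for some c > 0 (coming from the self-duality equation). Then u(p) ≤ 0; moreover if u(p) = 0 then u ≡ 0 near p (strong maximum principle), so if u is not identically 0 then u < 0 at its maximum, i.e., l⁴|a|²/|d|² < 1 on U. -/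
open Complex Real Filter

/-- The Laplacian of a function `u : ℂ → ℝ`, computed as the sum of the second
directional derivatives in the directions `1` and `i` (i.e. `u_xx + u_yy` on `ℝ² ≅ ℂ`). -/
noncomputable def laplacian (u : ℂ → ℝ) (x : ℂ) : ℝ :=
    (fderiv ℝ (fun y => fderiv ℝ u y 1) x) 1 +
      (fderiv ℝ (fun y => fderiv ℝ u y Complex.I) x) Complex.I

open Set Metric

lemma secondDeriv_test {g g1 : ℝ → ℝ} {a : ℝ}
    (hmax : IsLocalMax g 0)
    (hg : ∀ᶠ t in nhds (0:ℝ), HasDerivAt g (g1 t) t)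
    (hg1 : HasDerivAt g1 a 0) : a ≤ 0 := by
  by_contra hpos
  push_neg at hpos
  have h0 : g1 0 = 0 := hmax.hasDerivAt_eq_zero hg.self_of_nhds
  have hslope : Tendsto (slope g1 0) (nhdsWithin 0 {(0:ℝ)}ᶜ) (nhds a) :=
    hasDerivAt_iff_tendsto_slope.mp hg1
  have hev : ∀ᶠ t in nhdsWithin 0 {(0:ℝ)}ᶜ, 0 < slope g1 0 t :=
    hslope.eventually (eventually_gt_nhds hpos)
  have hright : ∀ᶠ t in nhdsWithin (0:ℝ) (Set.Ioi 0), 0 < g1 t := by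
    have := hev.filter_mono (nhdsWithin_mono 0 (fun t (ht : t ∈ Set.Ioi 0) => ne_of_gt ht))
    filter_upwards [this, self_mem_nhdsWithin] with t ht ht'
    have : slope g1 0 t = g1 t / t := by
      simp [slope_def_field, h0]
    rw [this] at ht
    have htpos : (0:ℝ) < t := ht'
    by_contra hng
    push_neg at hng
    nlinarith [mul_pos ht htpos, div_mul_cancel₀ (g1 t) (ne_of_gt htpos)]
  have hcomb : ∀ᶠ t in nhdsWithin (0:ℝ) (Set.Ioi 0),
      0 < g1 t ∧ HasDerivAt g (g1 t) t ∧ g t ≤ g 0 := by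
    filter_upwards [hright, (hg.and hmax).filter_mono nhdsWithin_le_nhds] with t h1 h2
    exact ⟨h1, h2.1, h2.2⟩
  obtain ⟨δ, (hδpos : (0:ℝ) < δ), hδ⟩ := mem_nhdsGT_iff_exists_Ioc_subset.mp hcomb
  have hmono : StrictMonoOn g (Set.Icc 0 δ) := by
    apply strictMonoOn_of_deriv_pos (convex_Icc 0 δ)
    · intro t ht
      rcases eq_or_lt_of_le ht.1 with h | h
      · have hc : ContinuousAt g t := by rw [← h]; exact hg.self_of_nhds.continuousAt
        exact hc.continuousWithinAt
      · exact ((hδ ⟨h, ht.2⟩).2.1.continuousAt).continuousWithinAt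
    · intro t ht
      rw [interior_Icc] at ht
      have h := hδ ⟨ht.1, le_of_lt ht.2⟩
      rw [h.2.1.deriv]
      exact h.1
  have : g 0 < g δ := hmono (by constructor <;> simp [le_of_lt hδpos]) (by simp [le_of_lt hδpos, hδpos]) hδpos
  have : g δ ≤ g 0 := (hδ ⟨hδpos, le_refl δ⟩).2.2
  linarith

lemma dir2_nonpos {u : ℂ → ℝ} {s : Set ℂ} (hs : IsOpen s)
    {p : ℂ} (hp : p ∈ s) (hu : ContDiffOn ℝ 2 u s) (hmax : IsLocalMax u p) (v : ℂ) :
    (fderiv ℝ (fun y => fderiv ℝ u y v) p) v ≤ 0 := by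
  have hdu : DifferentiableOn ℝ u s := hu.differentiableOn (by norm_num)
  have hDf : ContDiffOn ℝ 1 (fun y => fderiv ℝ u y) s :=
    hu.fderiv_of_isOpen hs (by norm_num)
  have hDp : DifferentiableAt ℝ (fun y => fderiv ℝ u y) p :=
    (hDf.differentiableOn (by norm_num)).differentiableAt (hs.mem_nhds hp)
  set line : ℝ → ℂ := fun t => p + t • v with hline
  have hline0 : line 0 = p := by simp [hline]
  have hlined : ∀ t : ℝ, HasDerivAt line v t := by
    intro t
    have := ((hasDerivAt_id t).smul_const v).const_add p
    rw [one_smul] at this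
    exact this
  have hlinec : Tendsto line (nhds 0) (nhds p) := by
    rw [← hline0]; exact (hlined 0).continuousAt
  set g : ℝ → ℝ := fun t => u (line t) with hgdef
  set g1 : ℝ → ℝ := fun t => fderiv ℝ u (line t) v with hg1def
  have hg : ∀ᶠ t in nhds (0:ℝ), HasDerivAt g (g1 t) t := by
    filter_upwards [hlinec.eventually (hs.mem_nhds hp)] with t ht
    exact ((hdu.differentiableAt (hs.mem_nhds ht)).hasFDerivAt).comp_hasDerivAt t (hlined t)
  have hD : DifferentiableAt ℝ (fun y => fderiv ℝ u y v) p :=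
    hDp.clm_apply (differentiableAt_const v)
  have hg1 : HasDerivAt g1 ((fderiv ℝ (fun y => fderiv ℝ u y v) p) v) 0 := by
    have h2 : HasFDerivAt (fun y => (fderiv ℝ u y) v)
        (fderiv ℝ (fun y => (fderiv ℝ u y) v) p) (line 0) := hline0 ▸ hD.hasFDerivAt
    exact h2.comp_hasDerivAt 0 (hlined 0)
  have hgmax : IsLocalMax g 0 := by
    have : ∀ᶠ t in nhds (0:ℝ), u (line t) ≤ u p := hlinec.eventually hmax
    unfold IsLocalMax IsMaxFilter
    simpa [hgdef, hline0] using this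
  exact secondDeriv_test hgmax hg hg1

lemma laplacian_nonpos {u : ℂ → ℝ} {s : Set ℂ} (hs : IsOpen s)
    {p : ℂ} (hp : p ∈ s) (hu : ContDiffOn ℝ 2 u s) (hmax : IsLocalMax u p) :
    laplacian u p ≤ 0 :=
  add_nonpos (dir2_nonpos hs hp hu hmax 1) (dir2_nonpos hs hp hu hmax Complex.I)

noncomputable def phi (α : ℝ) (b : ℂ) (x : ℂ) : ℝ :=
  Real.exp (-(α * ((x.re - b.re)^2 + (x.im - b.im)^2)))

lemma phi_pos (α : ℝ) (b x : ℂ) : 0 < phi α b x := Real.exp_pos _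

lemma phi_contDiff (α : ℝ) (b : ℂ) : ContDiff ℝ 2 (phi α b) := by
  have hre : ContDiff ℝ 2 (fun x : ℂ => x.re) := Complex.reCLM.contDiff
  have him : ContDiff ℝ 2 (fun x : ℂ => x.im) := Complex.imCLM.contDiff
  exact ((contDiff_const.mul (((hre.sub contDiff_const).pow 2).add
    ((him.sub contDiff_const).pow 2))).neg).exp

lemma phi_hasFDerivAt (α : ℝ) (b x : ℂ) :
    HasFDerivAt (phi α b)
      ((phi α b x * (-(2*α*(x.re - b.re)))) • Complex.reCLM
        + (phi α b x * (-(2*α*(x.im - b.im)))) • Complex.imCLM) x := by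
  have h1 : HasFDerivAt (fun x : ℂ => x.re - b.re) (Complex.reCLM : ℂ →L[ℝ] ℝ) x :=
    Complex.reCLM.hasFDerivAt.sub_const _
  have h2 : HasFDerivAt (fun x : ℂ => x.im - b.im) (Complex.imCLM : ℂ →L[ℝ] ℝ) x :=
    Complex.imCLM.hasFDerivAt.sub_const _
  have h3 := ((((h1.mul h1).add (h2.mul h2)).const_mul α).neg).exp
  unfold phi
  simp only [pow_two]
  refine h3.congr_fderiv ?_
  ext w
  simp
  ring

lemma phi_fderiv_apply (α : ℝ) (b x w : ℂ) :
    fderiv ℝ (phi α b) x w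
      = phi α b x * (-(2*α*((x.re - b.re)*w.re + (x.im - b.im)*w.im))) := by
  rw [(phi_hasFDerivAt α b x).fderiv]
  simp
  ring

lemma phi_laplacian (α : ℝ) (b x : ℂ) :
    laplacian (phi α b) x
      = phi α b x * (4*α^2*((x.re - b.re)^2 + (x.im - b.im)^2) - 4*α) := by
  have e1 : (fun y => fderiv ℝ (phi α b) y 1)
      = fun y => phi α b y * (-(2*α*(y.re - b.re))) := by
    funext y; rw [phi_fderiv_apply]; simp
  have eI : (fun y => fderiv ℝ (phi α b) y Complex.I)
      = fun y => phi α b y * (-(2*α*(y.im - b.im))) := by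
    funext y; rw [phi_fderiv_apply]; simp
  have hp1 : HasFDerivAt (fun y : ℂ => -(2*α*(y.re - b.re))) ((-(2*α)) • Complex.reCLM) x := by
    have := ((Complex.reCLM.hasFDerivAt (x := x)).sub_const b.re).const_mul (2*α) |>.neg
    exact this.congr_fderiv (neg_smul _ _).symm
  have hpI : HasFDerivAt (fun y : ℂ => -(2*α*(y.im - b.im))) ((-(2*α)) • Complex.imCLM) x := by
    have := ((Complex.imCLM.hasFDerivAt (x := x)).sub_const b.im).const_mul (2*α) |>.neg
    exact this.congr_fderiv (neg_smul _ _).symm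
  have h1 : HasFDerivAt (fun y => phi α b y * -(2*α*(y.re - b.re))) _ x :=
    (phi_hasFDerivAt α b x).mul hp1
  have hI : HasFDerivAt (fun y => phi α b y * -(2*α*(y.im - b.im))) _ x :=
    (phi_hasFDerivAt α b x).mul hpI
  rw [laplacian, e1, eI, h1.fderiv, hI.fderiv]
  simp [phi]
  ring

lemma laplacian_add_smul {u g : ℂ → ℝ} {s : Set ℂ} (hs : IsOpen s) {x : ℂ} (hx : x ∈ s)
    (hu : ContDiffOn ℝ 2 u s) (hg : ContDiff ℝ 2 g) (ε C : ℝ) :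
    laplacian (fun y => u y + ε * (g y - C)) x = laplacian u x + ε * laplacian g x := by
  have hud : ∀ y ∈ s, DifferentiableAt ℝ u y := fun y hy =>
    (hu.differentiableOn (by norm_num)).differentiableAt (hs.mem_nhds hy)
  have hgd : ∀ y : ℂ, DifferentiableAt ℝ g y := fun y =>
    (hg.differentiable (by norm_num)).differentiableAt
  have hfd : ∀ y ∈ s, fderiv ℝ (fun z => u z + ε * (g z - C)) y
      = fderiv ℝ u y + ε • fderiv ℝ g y := by
    intro y hy
    have hgy : HasFDerivAt (fun z => ε * (g z - C)) (ε • fderiv ℝ g y) y :=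
      (((hgd y).hasFDerivAt).sub_const C).const_mul ε
    exact ((hud y hy).hasFDerivAt.add hgy).fderiv
  have key : ∀ v : ℂ,
      fderiv ℝ (fun y => fderiv ℝ (fun z => u z + ε * (g z - C)) y v) x v
        = fderiv ℝ (fun y => fderiv ℝ u y v) x v
          + ε * fderiv ℝ (fun y => fderiv ℝ g y v) x v := by
    intro v
    have hev : (fun y => fderiv ℝ (fun z => u z + ε * (g z - C)) y v)
        =ᶠ[nhds x] (fun y => fderiv ℝ u y v + ε * fderiv ℝ g y v) := by
      filter_upwards [hs.mem_nhds hx] with y hy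
      rw [hfd y hy]
      simp
    rw [hev.fderiv_eq]
    -- differentiability of the two directional derivative maps
    have hDu : DifferentiableAt ℝ (fun y => fderiv ℝ u y v) x := by
      have h1 : DifferentiableAt ℝ (fun y => fderiv ℝ u y) x :=
        ((hu.fderiv_of_isOpen (m := 1) hs (by norm_num)).differentiableOn (by norm_num)).differentiableAt
          (hs.mem_nhds hx)
      exact h1.clm_apply (differentiableAt_const v)
    have hDg : DifferentiableAt ℝ (fun y => fderiv ℝ g y v) x := by
      have h1 : DifferentiableAt ℝ (fun y => fderiv ℝ g y) x :=
        ((hg.fderiv_right (m := 1) (by norm_num)).differentiable (by norm_num)).differentiableAt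
      exact h1.clm_apply (differentiableAt_const v)
    have h2 : HasFDerivAt (fun y => fderiv ℝ u y v + ε * fderiv ℝ g y v)
        (fderiv ℝ (fun y => fderiv ℝ u y v) x + ε • fderiv ℝ (fun y => fderiv ℝ g y v) x) x :=
      hDu.hasFDerivAt.add ((hDg.hasFDerivAt).const_mul ε)
    rw [h2.fderiv]
    simp
  rw [laplacian, laplacian, laplacian, key 1, key Complex.I]
  ring

lemma dist_sq (x y : ℂ) : (x.re - y.re)^2 + (x.im - y.im)^2 = dist x y ^ 2 := by
  rw [Complex.dist_eq, Complex.sq_norm, Complex.normSq_apply, Complex.sub_re, Complex.sub_im]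
  ring

lemma sinh_bound {t M c : ℝ} (hc : 0 < c) (ht : t ≤ 0) (htM : -M ≤ t) :
    (2*c*Real.exp M) * t ≤ c * (Real.exp t - Real.exp (-t)) := by
  have h1 : Real.exp (-t) ≤ Real.exp M := Real.exp_le_exp.mpr (by linarith)
  have h2 : 2*t + 1 ≤ Real.exp (2*t) := Real.add_one_le_exp _
  have h3 : Real.exp (-t) * Real.exp (2*t) = Real.exp t := by
    rw [← Real.exp_add]; ring_nf
  have h4 : 0 < Real.exp (-t) := Real.exp_pos _
  have h5 : Real.exp (-t) * (2*t) ≤ Real.exp t - Real.exp (-t) := by nlinarith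
  have h6 : Real.exp M * (2*t) ≤ Real.exp (-t) * (2*t) := by nlinarith
  nlinarith

set_option maxHeartbeats 2000000 in
lemma smp {U : Set ℂ} (hUopen : IsOpen U) {u : ℂ → ℝ} (hu : ContDiffOn ℝ 2 u U)
    {c : ℝ} (hc : 0 < c)
    (hΔ : ∀ x ∈ U, c * (Real.exp (u x) - Real.exp (-u x)) ≤ laplacian u x)
    (hle : ∀ x ∈ U, u x ≤ 0) {z : ℂ} (hz : z ∈ U) (huz : u z = 0) :
    ∀ᶠ x in nhds z, u x = 0 := by
  -- choose a closed ball inside U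
  obtain ⟨R0, hR0, hR0U⟩ := Metric.isOpen_iff.mp hUopen z hz
  set R := R0/2 with hRdef
  have hR : 0 < R := by positivity
  have hRU : Metric.closedBall z R ⊆ U :=
    (Metric.closedBall_subset_ball (by simp [hRdef]; linarith)).trans hR0U
  have hcont : ContinuousOn u (Metric.closedBall z R) := (hu.continuousOn).mono hRU
  -- lower bound for u on the closed ball
  obtain ⟨x₀, hx₀, hx₀min⟩ := (isCompact_closedBall z R).exists_isMinOn
    ⟨z, Metric.mem_closedBall_self hR.le⟩ hcont
  set M := -(u x₀) with hMdef
  have hM : ∀ x ∈ Metric.closedBall z R, -M ≤ u x := fun x hx => by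
    simpa [hMdef] using hx₀min hx
  set K := 2*c*Real.exp M with hKdef
  have hK : 0 < K := by positivity
  have hKu : ∀ x ∈ Metric.closedBall z R, K * u x ≤ laplacian u x := by
    intro x hx
    exact le_trans (sinh_bound hc (hle x (hRU hx)) (hM x hx)) (hΔ x (hRU hx))
  clear_value M K
  -- suppose u is not identically zero near z
  by_contra hcon
  rw [Filter.not_eventually] at hcon
  obtain ⟨y₀, hy₀ne, hy₀ball⟩ :=
    (hcon.and_eventually (Metric.ball_mem_nhds z (by positivity : (0:ℝ) < R/8))).exists
  have hy₀U : y₀ ∈ U := hRU (Metric.closedBall_subset_closedBall (by linarith : R/8 ≤ R)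
    (Metric.ball_subset_closedBall hy₀ball))
  have hy₀neg : u y₀ < 0 := lt_of_le_of_ne (hle y₀ hy₀U) hy₀ne
  -- the zero set A and the touching point z₀
  set A := {x | x ∈ Metric.closedBall z (R/2) ∧ u x = 0} with hAdef
  have hzA : z ∈ A := ⟨Metric.mem_closedBall_self (by positivity), huz⟩
  have hAsub : A ⊆ Metric.closedBall z R := fun x hx =>
    Metric.closedBall_subset_closedBall (by linarith) hx.1
  have hAclosed : IsClosed A := by
    have : A = Metric.closedBall z (R/2) ∩ u ⁻¹' {0} := by
      ext x; simp [hAdef]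
    rw [this]
    exact ContinuousOn.preimage_isClosed_of_isClosed
      (hcont.mono (Metric.closedBall_subset_closedBall (by linarith)))
      Metric.isClosed_closedBall isClosed_singleton
  have hAcomp : IsCompact A :=
    (isCompact_closedBall z R).of_isClosed_subset hAclosed hAsub
  set ρ := Metric.infDist y₀ A with hρdef
  have hρlt : ρ < R/8 := lt_of_le_of_lt (Metric.infDist_le_dist_of_mem hzA) hy₀ball
  have hρpos : 0 < ρ := by
    rcases lt_or_eq_of_le (Metric.infDist_nonneg (s := A) (x := y₀)) with h | h
    · exact h
    · exfalso
      exact hy₀ne (((hAclosed.mem_iff_infDist_zero ⟨z, hzA⟩).mpr h.symm).2)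
  obtain ⟨z₀, hz₀A, hz₀d⟩ := hAcomp.exists_infDist_eq_dist ⟨z, hzA⟩ y₀
  -- points of the closed ball around y₀ lie well inside
  have hloc : ∀ x, dist x y₀ ≤ ρ → x ∈ Metric.closedBall z (R/2) := by
    intro x hx
    have := dist_triangle x y₀ z
    have h2 : dist y₀ z < R/8 := hy₀ball
    simp only [Metric.mem_closedBall]
    linarith
  have hneg : ∀ x, dist x y₀ < ρ → u x < 0 := by
    intro x hx
    have hxU : x ∈ U := hRU (Metric.closedBall_subset_closedBall (by linarith)
      (hloc x hx.le))
    rcases lt_or_eq_of_le (hle x hxU) with h | h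
    · exact h
    · exfalso
      have hxA : x ∈ A := ⟨hloc x hx.le, h⟩
      have h2 : ρ ≤ dist y₀ x := Metric.infDist_le_dist_of_mem hxA
      rw [dist_comm] at hx
      linarith
  clear_value ρ
  -- barrier exponent
  set α := (5 + K*ρ^2)/ρ^2 with hαdef
  have hαpos : 0 < α := by
    rw [hαdef]; positivity
  have hαmain : K < α^2*ρ^2 - 4*α := by
    have e1 : α^2*ρ^2 - 4*α - K = α + 4*K + K^2*ρ^2 := by
      rw [hαdef]; field_simp; ring
    nlinarith [mul_pos hK (mul_pos hK (mul_pos hρpos hρpos)), hK, hαpos]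
  set Cρ := Real.exp (-(α*ρ^2)) with hCdef
  have hCpos : 0 < Cρ := Real.exp_pos _
  have hphiC : ∀ x : ℂ, dist x y₀ = ρ → phi α y₀ x = Cρ := by
    intro x hx
    unfold phi
    rw [dist_sq, hx]
  have hphile1 : ∀ x : ℂ, phi α y₀ x ≤ 1 := by
    intro x
    unfold phi
    rw [Real.exp_le_one_iff]
    nlinarith [sq_nonneg (x.re - y₀.re), sq_nonneg (x.im - y₀.im), hαpos.le]
  have hLφ : ∀ x : ℂ, ρ/2 ≤ dist x y₀ → dist x y₀ ≤ ρ →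
      K*(phi α y₀ x - Cρ) < laplacian (phi α y₀) x := by
    intro x h1 h2
    rw [phi_laplacian, dist_sq]
    have hφpos := phi_pos α y₀ x
    have hr1 : (ρ/2)^2 ≤ dist x y₀^2 := by nlinarith [hρpos.le, dist_nonneg (x := x) (y := y₀)]
    have hgap : 0 < 4*α^2*dist x y₀^2 - 4*α - K := by
      nlinarith [hαmain, hr1, mul_le_mul_of_nonneg_left hr1 (by positivity : (0:ℝ) ≤ 4*α^2)]
    nlinarith [mul_pos hφpos hgap, mul_pos hK hCpos]
  clear_value α Cρ
  -- the inner sphere and the constant ε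
  have hspne : (Metric.sphere y₀ (ρ/2)).Nonempty :=
    NormedSpace.sphere_nonempty.mpr (by positivity)
  have hspsub : Metric.sphere y₀ (ρ/2) ⊆ Metric.closedBall z R := by
    intro x hx
    have hd : dist x y₀ = ρ/2 := hx
    exact Metric.closedBall_subset_closedBall (by linarith) (hloc x (by linarith))
  obtain ⟨w₀, hw₀sp, hw₀max⟩ :=
    (isCompact_sphere y₀ (ρ/2)).exists_isMaxOn hspne (hcont.mono hspsub)
  set ε := -(u w₀) with hεdef
  have hw₀d : dist w₀ y₀ = ρ/2 := hw₀sp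
  have hεpos : 0 < ε := by
    have h1 : u w₀ < 0 := hneg w₀ (by rw [hw₀d]; linarith)
    rw [hεdef]; linarith
  have hsp_le : ∀ x ∈ Metric.sphere y₀ (ρ/2), u x ≤ -ε := by
    intro x hx
    have h1 : u x ≤ u w₀ := hw₀max hx
    rw [hεdef]; linarith
  clear_value ε
  -- the comparison function h
  set h : ℂ → ℝ := fun x => u x + ε * (phi α y₀ x - Cρ) with hhdef
  have hballzR : Metric.ball z R ⊆ U := fun x hx => hRU (Metric.ball_subset_closedBall hx)
  have hphi2 : ContDiff ℝ 2 (fun x => ε * (phi α y₀ x - Cρ)) :=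
    contDiff_const.mul ((phi_contDiff α y₀).sub contDiff_const)
  have hh2 : ContDiffOn ℝ 2 h (Metric.ball z R) :=
    (hu.mono hballzR).add hphi2.contDiffOn
  -- the annulus
  set S := Metric.closedBall y₀ ρ \ Metric.ball y₀ (ρ/2) with hSdef
  have hdz₀ : dist z₀ y₀ = ρ := by rw [dist_comm, hρdef]; exact hz₀d.symm
  have hz₀S : z₀ ∈ S := by
    constructor
    · simp only [Metric.mem_closedBall]; linarith [hdz₀.le]
    · simp only [Metric.mem_ball, not_lt]; linarith [hdz₀.ge]
  have hSd : ∀ x ∈ S, ρ/2 ≤ dist x y₀ ∧ dist x y₀ ≤ ρ := by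
    intro x hx
    exact ⟨not_lt.mp (by simpa [Metric.mem_ball] using hx.2), by simpa using hx.1⟩
  have hSsub2 : S ⊆ Metric.closedBall z (R/2) := fun x hx => hloc x (hSd x hx).2
  have hSsubR : S ⊆ Metric.closedBall z R :=
    hSsub2.trans (Metric.closedBall_subset_closedBall (by linarith))
  have hSball : S ⊆ Metric.ball z R := by
    intro x hx
    have := hSsub2 hx
    simp only [Metric.mem_closedBall] at this
    simp only [Metric.mem_ball]
    linarith
  have hScomp : IsCompact S := (isCompact_closedBall y₀ ρ).diff Metric.isOpen_ball
  have hhcont : ContinuousOn h S :=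
    (hcont.mono hSsubR).add (hphi2.continuous.continuousOn)
  -- weak maximum principle on the annulus
  have hWMP : ∀ x ∈ S, h x ≤ 0 := by
    obtain ⟨q, hqS, hqmax⟩ := hScomp.exists_isMaxOn ⟨z₀, hz₀S⟩ hhcont
    have hq : h q ≤ 0 := by
      by_contra hq0
      push_neg at hq0
      obtain ⟨hq2, hq1⟩ := hSd q hqS
      have hqU : q ∈ U := hRU (hSsubR hqS)
      rcases eq_or_lt_of_le hq1 with houter | houter
      · -- on the outer circle h = u ≤ 0
        have : h q = u q := by rw [hhdef]; simp [hphiC q houter]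
        linarith [hle q hqU, this ▸ hq0]
      rcases eq_or_lt_of_le hq2 with hinner | hinner
      · -- on the inner circle h ≤ -ε + ε·φ < 0
        have h3 : u q ≤ -ε := hsp_le q (by rw [Metric.mem_sphere]; exact hinner.symm)
        have h4 : phi α y₀ q ≤ 1 := hphile1 q
        have : h q < 0 := by
          rw [hhdef]
          simp only
          nlinarith [mul_pos hεpos hCpos]
        linarith
      · -- interior contradiction via the elliptic inequality
        have hO : IsOpen (Metric.ball y₀ ρ \ Metric.closedBall y₀ (ρ/2)) :=
          Metric.isOpen_ball.sdiff Metric.isClosed_closedBall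
        have hqO : q ∈ Metric.ball y₀ ρ \ Metric.closedBall y₀ (ρ/2) := by
          constructor
          · simpa [Metric.mem_ball] using houter
          · simp only [Metric.mem_closedBall, not_le]; linarith
        have hOS : Metric.ball y₀ ρ \ Metric.closedBall y₀ (ρ/2) ⊆ S := by
          intro x hx
          exact ⟨Metric.ball_subset_closedBall hx.1,
            fun hc => hx.2 (Metric.ball_subset_closedBall hc)⟩
        have hlocmax : IsLocalMax h q :=
          hqmax.isLocalMax (mem_of_superset (hO.mem_nhds hqO) hOS)
        have hqball : q ∈ Metric.ball z R := hSball hqS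
        have hl0 : laplacian h q ≤ 0 :=
          laplacian_nonpos Metric.isOpen_ball hqball hh2 hlocmax
        have hsplit : laplacian h q = laplacian u q + ε * laplacian (phi α y₀) q :=
          laplacian_add_smul Metric.isOpen_ball hqball (hu.mono hballzR)
            (phi_contDiff α y₀) ε Cρ
        have h5 := hKu q (Metric.ball_subset_closedBall hqball)
        have h6 := hLφ q hq2 hq1
        have h7 : K * h q < laplacian h q := by
          rw [hsplit, hhdef]
          simp only
          nlinarith
        nlinarith [mul_pos hK hq0]
    intro x hx
    exact le_trans (hqmax hx) hq
  -- Hopf boundary-point argument at z₀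
  have huz₀ : u z₀ = 0 := hz₀A.2
  have hz₀U : z₀ ∈ U := hRU (Metric.closedBall_subset_closedBall (by linarith) hz₀A.1)
  have hulocmax : IsLocalMax u z₀ := by
    filter_upwards [hUopen.mem_nhds hz₀U] with x hx
    rw [huz₀]
    exact hle x hx
  have hfdu : fderiv ℝ u z₀ = 0 := hulocmax.fderiv_eq_zero
  set w : ℂ := y₀ - z₀ with hwdef
  have hz₀ball : z₀ ∈ Metric.ball z R := by
    have := hz₀A.1
    simp only [Metric.mem_closedBall] at this
    simp only [Metric.mem_ball]
    linarith
  have hud : DifferentiableAt ℝ u z₀ :=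
    ((hu.mono hballzR).differentiableOn (by norm_num)).differentiableAt
      (Metric.isOpen_ball.mem_nhds hz₀ball)
  have hφd : HasFDerivAt (fun x => ε * (phi α y₀ x - Cρ)) (ε • fderiv ℝ (phi α y₀) z₀) z₀ :=
    ((((phi_contDiff α y₀).differentiable (by norm_num) z₀).hasFDerivAt).sub_const Cρ).const_mul ε
  have hhd : HasFDerivAt h (fderiv ℝ u z₀ + ε • fderiv ℝ (phi α y₀) z₀) z₀ :=
    hud.hasFDerivAt.add hφd
  have hlined : ∀ t : ℝ, HasDerivAt (fun t : ℝ => z₀ + t • w) w t := by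
    intro t
    simpa using ((hasDerivAt_id t).smul_const w).const_add z₀
  have hg : HasDerivAt (fun t : ℝ => h (z₀ + t • w))
      ((fderiv ℝ u z₀ + ε • fderiv ℝ (phi α y₀) z₀) w) 0 := by
    have h2 : HasFDerivAt h (fderiv ℝ u z₀ + ε • fderiv ℝ (phi α y₀) z₀)
        ((fun t : ℝ => z₀ + t • w) 0) := by simpa using hhd
    exact h2.comp_hasDerivAt 0 (hlined 0)
  have hρsq : (z₀.re - y₀.re)^2 + (z₀.im - y₀.im)^2 = ρ^2 := by
    rw [dist_sq, hdz₀]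
  have hdpos : 0 < (fderiv ℝ u z₀ + ε • fderiv ℝ (phi α y₀) z₀) w := by
    rw [ContinuousLinearMap.add_apply, hfdu]
    simp only [ContinuousLinearMap.zero_apply, ContinuousLinearMap.smul_apply, zero_add,
      smul_eq_mul]
    rw [phi_fderiv_apply]
    have : (z₀.re - y₀.re)*w.re + (z₀.im - y₀.im)*w.im = -(ρ^2) := by
      rw [hwdef]
      simp only [Complex.sub_re, Complex.sub_im]
      nlinarith [hρsq]
    rw [this]
    have := phi_pos α y₀ z₀
    have hρ2 : 0 < ρ^2 := by positivity
    nlinarith [mul_pos hεpos (mul_pos this (mul_pos hαpos hρ2))]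
  have hz₀0 : h z₀ = 0 := by
    rw [hhdef]
    simp [huz₀, hphiC z₀ hdz₀]
  have hseg : ∀ t : ℝ, 0 < t → t ≤ 1/2 → h (z₀ + t • w) ≤ 0 := by
    intro t ht0 ht1
    apply hWMP
    have hdist : dist (z₀ + t • w) y₀ = (1 - t) * ρ := by
      rw [dist_eq_norm]
      have e : z₀ + t • w - y₀ = (t - 1) • (y₀ - z₀) := by
        rw [hwdef, Complex.real_smul, Complex.real_smul]
        push_cast
        ring
      rw [e, norm_smul]
      rw [show ‖y₀ - z₀‖ = ρ by rw [← dist_eq_norm, dist_comm]; exact hdz₀]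
      have : |t - 1| = 1 - t := by rw [abs_of_nonpos (by linarith)]; ring
      simp [Real.norm_eq_abs, this]
    constructor
    · simp only [Metric.mem_closedBall]
      rw [hdist]
      nlinarith
    · simp only [Metric.mem_ball, not_lt]
      rw [hdist]
      nlinarith
  -- contradiction: the directional derivative must be ≤ 0
  have hslope := hasDerivAt_iff_tendsto_slope.mp hg
  have hev : ∀ᶠ t in nhdsWithin (0:ℝ) {(0:ℝ)}ᶜ,
      0 < slope (fun t : ℝ => h (z₀ + t • w)) 0 t :=
    hslope.eventually (eventually_gt_nhds hdpos)
  have hev2 : ∀ᶠ t in nhdsWithin (0:ℝ) (Set.Ioi 0),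
      0 < slope (fun t : ℝ => h (z₀ + t • w)) 0 t :=
    hev.filter_mono (nhdsWithin_mono 0 (fun t (ht : t ∈ Set.Ioi 0) => ne_of_gt ht))
  have hIoc : Set.Ioc (0:ℝ) (1/2) ∈ nhdsWithin (0:ℝ) (Set.Ioi 0) :=
    Ioc_mem_nhdsGT_of_mem ⟨le_refl 0, by norm_num⟩
  obtain ⟨t, hts, htIoc⟩ := (hev2.and (eventually_of_mem hIoc (fun x hx => hx))).exists
  have hslope_t : slope (fun t : ℝ => h (z₀ + t • w)) 0 t
      = h (z₀ + t • w) / t := by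
    rw [slope_def_field]
    rw [show z₀ + (0:ℝ) • w = z₀ by simp, hz₀0]
    simp
  rw [hslope_t] at hts
  have := hseg t htIoc.1 htIoc.2
  have ht0 : 0 < t := htIoc.1
  have hpos2 : 0 < h (z₀ + t • w) := by
    have h9 := mul_pos hts ht0
    rwa [div_mul_cancel₀ _ (ne_of_gt ht0)] at h9
  linarith

/-- Maximum principle argument: let `u` (standing for `log (l⁴|a|²/|d|²)`) be `C²` on a
connected open set `U ⊆ ℂ`, attain an interior maximum on `U` at `p ∈ U`, and satisfy
the elliptic inequality `Δu ≥ c (e^u − e^{−u})` on `U` for some `c > 0`.  Then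
`u(p) ≤ 0`; if `u(p) = 0` then `u ≡ 0` near `p` (strong maximum principle); and if `u`
is not identically `0` on `U` then `u < 0` on all of `U`, i.e. `l⁴|a|²/|d|² < 1`. -/
theorem max_principle_selfduality (U : Set ℂ) (hUopen : IsOpen U) (hUconn : IsConnected U)
    (u : ℂ → ℝ) (hu : ContDiffOn ℝ 2 u U)
    (p : ℂ) (hp : p ∈ U) (hmax : IsMaxOn u U p)
    (c : ℝ) (hc : 0 < c)
    (hΔ : ∀ x ∈ U, c * (Real.exp (u x) - Real.exp (-u x)) ≤ laplacian u x) :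
    u p ≤ 0 ∧
      (u p = 0 → ∀ᶠ x in nhds p, u x = 0) ∧
      ((¬ ∀ x ∈ U, u x = 0) → ∀ x ∈ U, u x < 0) := by
  have hploc : IsLocalMax u p := hmax.isLocalMax (hUopen.mem_nhds hp)
  have h1 : u p ≤ 0 := by
    have hl := laplacian_nonpos hUopen hp hu hploc
    have h2 := hΔ p hp
    have h3 : Real.exp (u p) - Real.exp (-u p) ≤ 0 := by
      by_contra hA
      push_neg at hA
      nlinarith [mul_pos hc hA]
    have h4 : Real.exp (u p) ≤ Real.exp (-u p) := by linarith
    have h5 := Real.exp_le_exp.mp h4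
    linarith
  have hle : ∀ x ∈ U, u x ≤ 0 := fun x hx => (hmax hx).trans h1
  have hkey : u p = 0 → ∀ y ∈ U, u y = 0 := by
    intro hup0
    by_contra hk
    push_neg at hk
    obtain ⟨y, hyU, hyne⟩ := hk
    have hO1 : IsOpen {y : ℂ | ∀ᶠ x in nhds y, u x = 0} := isOpen_setOf_eventually_nhds
    have hO2 : IsOpen (U ∩ u ⁻¹' {(0:ℝ)}ᶜ) :=
      hu.continuousOn.isOpen_inter_preimage hUopen isOpen_compl_singleton
    have hsub : U ⊆ {y | ∀ᶠ x in nhds y, u x = 0} ∪ (U ∩ u ⁻¹' {(0:ℝ)}ᶜ) := by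
      intro a haU
      by_cases hua : u a = 0
      · exact Or.inl (smp hUopen hu hc hΔ hle haU hua)
      · exact Or.inr ⟨haU, hua⟩
    have hne1 : (U ∩ {y | ∀ᶠ x in nhds y, u x = 0}).Nonempty :=
      ⟨p, hp, smp hUopen hu hc hΔ hle hp hup0⟩
    have hne2 : (U ∩ (U ∩ u ⁻¹' {(0:ℝ)}ᶜ)).Nonempty := ⟨y, hyU, hyU, hyne⟩
    obtain ⟨a, -, ha1, ha2⟩ :=
      hUconn.isPreconnected _ _ hO1 hO2 hsub hne1 hne2
    exact ha2.2 ha1.self_of_nhds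
  refine ⟨h1, ?_, ?_⟩
  · intro hup0
    exact smp hUopen hu hc hΔ hle hp hup0
  · intro hne x hx
    rcases lt_or_eq_of_le h1 with h | h
    · exact lt_of_le_of_lt (hmax hx) h
    · exact absurd (hkey h) hne
end
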